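/- arXiv:1803.01464 — 2 statements merged into one kernel-verified Lean document; each statement's English description precedes it below -/
import Mathlib

section
/- Explicit Green function in dimension one: let g be the S×S integer matrix defined by g(x,x) = 1 − deg(x) if x is a vertex of vertex degree deg(x); g(x,x) = −1 if x is an edge; g(x,y) = −1 if x and y are distinct vertices joined by an edge of G; g(x,y) = 1 if one of x, y is a vertex and the other is an edge containing that vertex; and g(x,y) = 0 in all remaining cases (distinct non-adjacent vertices, distinct edges, or a vertex not contained in the edge). Then L · g = 1, i.e. g is the inverse of the connection Laplacian L. -/
open Matrix

variable {V : Type*} [Fintype V] [DecidableEq V]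

/-- The simplices of the 1-dimensional simplicial complex of a graph: vertices and edges. -/
abbrev Simplex (G : SimpleGraph V) [DecidableRel G.Adj] := V ⊕ G.edgeSet

variable (G : SimpleGraph V) [DecidableRel G.Adj]

/-- The vertex set of a simplex. -/
def sVerts : Simplex G → Set V
  | Sum.inl u => {u}
  | Sum.inr f => {w | w ∈ (f : Sym2 V)}

instance (x : Simplex G) (w : V) : Decidable (w ∈ sVerts G x) :=
  match x with
  | Sum.inl u => decidable_of_iff (w = u) (by simp [sVerts])
  | Sum.inr f => decidable_of_iff (w ∈ (f : Sym2 V)) (by simp [sVerts])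

/-- Two simplices touch if their vertex sets intersect. -/
def touches (x y : Simplex G) : Prop := ∃ w, w ∈ sVerts G x ∧ w ∈ sVerts G y

instance : DecidableRel (touches G) := fun _ _ => Fintype.decidableExistsFintype

/-- The connection Laplacian. -/
def connL : Matrix (Simplex G) (Simplex G) ℤ :=
  Matrix.of fun x y => if touches G x y then 1 else 0

/-- The explicit Green function in dimension one. -/
def green : Matrix (Simplex G) (Simplex G) ℤ :=
  Matrix.of fun x y =>
    match x, y with
    | Sum.inl u, Sum.inl w =>
        if u = w then 1 - (G.degree u : ℤ)
        else if G.Adj u w then -1 else 0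
    | Sum.inl u, Sum.inr f => if u ∈ (f : Sym2 V) then 1 else 0
    | Sum.inr f, Sum.inl u => if u ∈ (f : Sym2 V) then 1 else 0
    | Sum.inr f, Sum.inr g => if f = g then -1 else 0

/-! With `B` the vertex–edge incidence matrix, `B Bᵀ` is the degree matrix plus the adjacency
matrix, and `Bᵀ B` has `2` on the diagonal and, off it, `1` exactly for touching edges, since two
distinct edges share at most one vertex. Hence `L = [[1, B], [Bᵀ, Bᵀ B - 1]]` and
`g = [[1 - B Bᵀ, B], [Bᵀ, -1]]` in block form, and these two block matrices are inverse to each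
other for every matrix `B`. -/

theorem Matrix.fromBlocks_mul_fromBlocks_eq_one {m n R : Type*} [Fintype m] [Fintype n]
    [DecidableEq m] [DecidableEq n] [Ring R] (B : Matrix m n R) (C : Matrix n m R) :
    fromBlocks 1 B C (C * B - 1) * fromBlocks (1 - B * C) B C (-1) = 1 := by
  simp only [fromBlocks_multiply, Matrix.mul_sub, Matrix.sub_mul, Matrix.mul_neg,
    Matrix.one_mul, Matrix.mul_one, Matrix.mul_assoc, ← fromBlocks_one]
  congr 1 <;> abel

theorem Sym2.sum_boole_mem_and_mem {α R : Type*} [Fintype α] [DecidableEq α]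
    [AddCommMonoidWithOne R] {z z' : Sym2 α} (h : z ≠ z') :
    ∑ w, (if w ∈ z ∧ w ∈ z' then 1 else 0 : R) = if ∃ w, w ∈ z ∧ w ∈ z' then 1 else 0 := by
  have hunique : ∀ a b, a ∈ z ∧ a ∈ z' → b ∈ z ∧ b ∈ z' → a = b := by
    rintro a b ⟨ha, ha'⟩ ⟨hb, hb'⟩
    by_contra hab
    exact h (((mem_and_mem_iff hab).1 ⟨ha, hb⟩).trans ((mem_and_mem_iff hab).1 ⟨ha', hb'⟩).symm)
  split_ifs with hex
  · obtain ⟨a, ha⟩ := hex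
    rw [Finset.sum_eq_single a (fun b _ hb => if_neg fun hb' => hb (hunique b a hb' ha)) (by simp),
      if_pos ha]
  · exact Finset.sum_eq_zero fun w _ => if_neg fun hw => hex ⟨w, hw⟩

namespace SimpleGraph

variable {α R : Type*} [DecidableEq α] (G : SimpleGraph α) [DecidableRel G.Adj]

variable (R) in
def edgeIncMatrix [Zero R] [One R] : Matrix α G.edgeSet R :=
  (G.incMatrix R).submatrix id (↑)

theorem edgeIncMatrix_apply [Zero R] [One R] (u : α) (f : G.edgeSet) :
    G.edgeIncMatrix R u f = if u ∈ (f : Sym2 α) then 1 else 0 := by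
  simp [edgeIncMatrix, incMatrix_apply', incidenceSet, f.2]

variable [Fintype α]

theorem edgeIncMatrix_mul_transpose [Semiring R] :
    G.edgeIncMatrix R * (G.edgeIncMatrix R)ᵀ =
      of fun a b => if a = b then (G.degree a : R) else if G.Adj a b then 1 else 0 := by
  rw [← incMatrix_mul_transpose]
  ext u w
  simp only [edgeIncMatrix, mul_apply, transpose_apply, submatrix_apply, id]
  rw [Finset.sum_set_coe (f := fun e => G.incMatrix R u e * G.incMatrix R w e)]
  refine Finset.sum_subset (Finset.subset_univ _) fun e _ he => ?_
  rw [incMatrix_of_notMem_incidenceSet G (fun h => he (by simpa using h.1)), zero_mul]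

theorem transpose_edgeIncMatrix_mul_apply [NonAssocSemiring R] (f h : G.edgeSet) :
    ((G.edgeIncMatrix R)ᵀ * G.edgeIncMatrix R) f h =
      if f = h then 2 else if ∃ w, w ∈ (f : Sym2 α) ∧ w ∈ (h : Sym2 α) then 1 else 0 := by
  by_cases hfh : f = h
  · subst hfh
    exact ((incMatrix_transpose_mul_diag G).trans (if_pos f.2)).trans (if_pos rfl).symm
  · rw [if_neg hfh]
    simp only [mul_apply, transpose_apply, edgeIncMatrix_apply, ite_zero_mul_ite_zero, mul_one]
    exact Sym2.sum_boole_mem_and_mem (fun e => hfh (Subtype.ext e))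

end SimpleGraph

open SimpleGraph

theorem connL_eq_fromBlocks :
    connL G = fromBlocks 1 (G.edgeIncMatrix ℤ) (G.edgeIncMatrix ℤ)ᵀ
      ((G.edgeIncMatrix ℤ)ᵀ * G.edgeIncMatrix ℤ - 1) := by
  ext (u | f) (w | h)
  · simp [connL, touches, sVerts, one_apply]
  · simp [connL, touches, sVerts, edgeIncMatrix_apply]
  · simp [connL, touches, sVerts, edgeIncMatrix_apply]
  · by_cases hfh : f = h
    · subst hfh
      have hf : ∃ w, w ∈ (f : Sym2 V) := ⟨_, Sym2.out_fst_mem _⟩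
      simp [connL, touches, sVerts, transpose_edgeIncMatrix_mul_apply, hf]
    · simp [connL, touches, sVerts, transpose_edgeIncMatrix_mul_apply, hfh]

theorem green_eq_fromBlocks :
    green G = fromBlocks (1 - G.edgeIncMatrix ℤ * (G.edgeIncMatrix ℤ)ᵀ) (G.edgeIncMatrix ℤ)
      (G.edgeIncMatrix ℤ)ᵀ (-1) := by
  ext (u | f) (w | h)
  · simp only [green, edgeIncMatrix_mul_transpose, of_apply, fromBlocks_apply₁₁,
      Matrix.sub_apply, one_apply]
    split_ifs <;> simp
  · simp [green, edgeIncMatrix_apply]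
  · simp [green, edgeIncMatrix_apply]
  · simp only [green, of_apply, fromBlocks_apply₂₂, Matrix.neg_apply, one_apply]
    split_ifs <;> simp

/-- Explicit Green function in dimension one: `g` is a right inverse of the
connection Laplacian `L`. -/
theorem green_inverse : connL G * green G = 1 := by
  rw [connL_eq_fromBlocks, green_eq_fromBlocks, fromBlocks_mul_fromBlocks_eq_one]
end

section
/- Random walk estimate: if G has at least one vertex, then for every integer k ≥ 1 and every eigenvalue μ of the Kirchhoff Laplacian H₀ of G, one has μ ≤ r_k − 1/r_k, where r_k = 1 + P(k)^{1/k} (real k-th root) and P(k) = max_{x∈S} ∑_{y∈S} (A'^k)(x,y) is the maximal number of paths of length k in the connection graph G' starting at a simplex x. -/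
/-!
An eigenvector `w` of `H₀ = B - A` gives, through `|w|`, a Rayleigh quotient of the signless
Laplacian `B + A = N Nᵀ` (`N` the vertex–edge incidence matrix) that is at least `μ`. Ordering the
simplices as `V ⊕ E`, the connection graph has adjacency matrix `[[0, N], [Nᵀ, NᵀN - 2]]`; on the
test vectors `(α N z, z)` with `z = Nᵀ |w|` its quadratic form is
`(2α + 1) ‖N z‖² - 2 ‖z‖²`, and together with Cauchy–Schwarz `‖z‖⁴ ≤ ‖w‖² ‖N z‖²` the choice
`α = 1/ρ` yields `μ ≤ (1 + ρ) - 1/(1 + ρ)` for every upper bound `ρ` of the Rayleigh quotients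
of `A'`. Finally each eigenvalue `λ` of `A'` has `|λ|^k ≤ P(k)`, by Gershgorin's theorem for the
nonnegative matrix `A'^k`, so `ρ = P(k)^(1/k)` is such a bound.
-/

open Matrix

variable {V : Type*} [Fintype V] [DecidableEq V]

variable (G : SimpleGraph V) [DecidableRel G.Adj]

/-- The connection graph `G'`: two distinct simplices are adjacent iff their
vertex sets intersect. -/
def connGraph : SimpleGraph (Simplex G) where
  Adj x y := x ≠ y ∧ touches G x y
  symm := ⟨by
    rintro x y ⟨hxy, w, h1, h2⟩
    exact ⟨Ne.symm hxy, w, h2, h1⟩⟩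
  loopless := ⟨fun x h => h.1 rfl⟩

instance : DecidableRel (connGraph G).Adj :=
  fun x y => inferInstanceAs (Decidable (x ≠ y ∧ touches G x y))

/-- The Kirchhoff Laplacian of `G`: diagonal degree matrix minus adjacency matrix. -/
def kirchhoff : Matrix V V ℝ :=
  Matrix.diagonal (fun u => (G.degree u : ℝ)) - G.adjMatrix ℝ

/-- `P G k`: the maximal number of paths of length `k` in the connection graph `G'`
starting at a simplex, computed from the `k`-th power of its adjacency matrix. -/
noncomputable def maxPaths (k : ℕ) : ℝ :=
  ⨆ x : Simplex G, ∑ y : Simplex G, (((connGraph G).adjMatrix ℝ) ^ k) x y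

section Spectral

variable {n : Type*} [Fintype n]

theorem Matrix.mulVec_dotProduct_le_of_abs_le {K M : Matrix n n ℝ} (hKM : ∀ i j, |K i j| ≤ M i j)
    (w : n → ℝ) : K *ᵥ w ⬝ᵥ w ≤ M *ᵥ |w| ⬝ᵥ |w| := by
  simp only [dotProduct, mulVec, Finset.sum_mul, Pi.abs_apply]
  refine Finset.sum_le_sum fun i _ => Finset.sum_le_sum fun j _ => ?_
  calc K i j * w j * w i ≤ |K i j * w j * w i| := le_abs_self _
    _ = |K i j| * |w j| * |w i| := by rw [abs_mul, abs_mul]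
    _ ≤ M i j * |w j| * |w i| := by gcongr; exact hKM i j

variable [DecidableEq n]

open scoped MatrixOrder in
theorem Matrix.IsHermitian.mulVec_dotProduct_le {Q : Matrix n n ℝ} (hQ : Q.IsHermitian) {c : ℝ}
    (hc : ∀ x ∈ spectrum ℝ Q, x ≤ c) (v : n → ℝ) : Q *ᵥ v ⬝ᵥ v ≤ c * (v ⬝ᵥ v) := by
  have h := (le_iff.mp ((le_algebraMap_iff_spectrum_le hQ.isSelfAdjoint).mpr hc))
    |>.dotProduct_mulVec_nonneg v
  simpa [Algebra.algebraMap_eq_smul_one, sub_mulVec, smul_mulVec, dotProduct_comm v,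
    dotProduct_sub] using h

theorem abs_le_iSup_sum_of_mem_spectrum {B : Matrix n n ℝ} (hB : ∀ i j, 0 ≤ B i j) {b : ℝ}
    (hb : b ∈ spectrum ℝ B) : |b| ≤ ⨆ i, ∑ j, B i j := by
  rw [← spectrum_toLin', ← Module.End.hasEigenvalue_iff_mem_spectrum] at hb
  obtain ⟨i, hi⟩ := eigenvalue_mem_ball hb
  rw [Metric.mem_closedBall, Real.dist_eq] at hi
  simp only [Real.norm_eq_abs, abs_of_nonneg (hB _ _)] at hi
  calc |b| ≤ B i i + ∑ j ∈ Finset.univ.erase i, B i j := by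
        have := abs_sub_abs_le_abs_sub b (B i i)
        rw [abs_of_nonneg (hB i i)] at this
        linarith
    _ = ∑ j, B i j := Finset.add_sum_erase _ _ (Finset.mem_univ i)
    _ ≤ ⨆ i, ∑ j, B i j := le_ciSup (Set.finite_range fun i => ∑ j, B i j).bddAbove i

theorem le_iSup_sum_pow_rpow_of_mem_spectrum {Q : Matrix n n ℝ} {k : ℕ} (hk : k ≠ 0)
    (hQk : ∀ i j, 0 ≤ (Q ^ k) i j) {x : ℝ} (hx : x ∈ spectrum ℝ Q) :
    x ≤ (⨆ i, ∑ j, (Q ^ k) i j) ^ ((1 : ℝ) / k) :=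
  calc x ≤ |x| := le_abs_self x
    _ = (|x| ^ k) ^ ((1 : ℝ) / k) := by rw [one_div, Real.pow_rpow_inv_natCast (abs_nonneg x) hk]
    _ ≤ _ := by
      gcongr
      rw [← abs_pow]
      exact abs_le_iSup_sum_of_mem_spectrum hQk (spectrum.pow_mem_pow Q k hx)

end Spectral

theorem SimpleGraph.adjMatrix_mulVec_dotProduct_le {W : Type*} [Fintype W] [DecidableEq W]
    (H : SimpleGraph W) [DecidableRel H.Adj] {k : ℕ} (hk : k ≠ 0) (v : W → ℝ) :
    H.adjMatrix ℝ *ᵥ v ⬝ᵥ v ≤ (⨆ x, ∑ y, (H.adjMatrix ℝ ^ k) x y) ^ ((1 : ℝ) / k) * (v ⬝ᵥ v) :=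
  (H.isHermitian_adjMatrix ℝ).mulVec_dotProduct_le (fun _ hx =>
    le_iSup_sum_pow_rpow_of_mem_spectrum hk
      (fun x y => by rw [H.adjMatrix_pow_apply_eq_card_walk]; positivity) hx) v

section TestVector

variable {m e : Type*} [Fintype m] [Fintype e] [DecidableEq e]

theorem fromBlocks_mulVec_sumElim_dotProduct (N : Matrix m e ℝ) (z : e → ℝ) (α : ℝ) :
    fromBlocks 0 N Nᵀ (Nᵀ * N - 2) *ᵥ Sum.elim (α • (N *ᵥ z)) z ⬝ᵥ Sum.elim (α • (N *ᵥ z)) z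
      = (2 * α + 1) * (N *ᵥ z ⬝ᵥ N *ᵥ z) - 2 * (z ⬝ᵥ z) := by
  have hNt : ∀ y, Nᵀ *ᵥ y ⬝ᵥ z = y ⬝ᵥ N *ᵥ z := fun y => by
    rw [mulVec_transpose, dotProduct_mulVec]
  simp only [fromBlocks_mulVec, sumElim_dotProduct_sumElim, Sum.elim_comp_inl, Sum.elim_comp_inr,
    zero_mulVec, zero_add, sub_mulVec, ← mulVec_mulVec, add_dotProduct, sub_dotProduct, hNt,
    ofNat_mulVec, dotProduct_comm (N *ᵥ z), smul_dotProduct, smul_eq_mul]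
  ring

theorem mul_transpose_mulVec_dotProduct_le (N : Matrix m e ℝ) {ρ : ℝ} (hρ : 0 ≤ ρ)
    (h : ∀ v, fromBlocks 0 N Nᵀ (Nᵀ * N - 2) *ᵥ v ⬝ᵥ v ≤ ρ * (v ⬝ᵥ v)) (x : m → ℝ) :
    (N * Nᵀ) *ᵥ x ⬝ᵥ x ≤ (1 + ρ - 1 / (1 + ρ)) * (x ⬝ᵥ x) := by
  set z := Nᵀ *ᵥ x
  set Z := z ⬝ᵥ z
  set Q := N *ᵥ z ⬝ᵥ N *ᵥ z
  have hZx : x ⬝ᵥ N *ᵥ z = Z := by rw [dotProduct_mulVec, ← mulVec_transpose]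
  have hCS : Z ^ 2 ≤ (x ⬝ᵥ x) * Q := by
    rw [← hZx]
    simpa only [Q, dotProduct, sq] using Finset.sum_mul_sq_le_sq_mul_sq Finset.univ x (N *ᵥ z)
  have htest : ∀ α, (2 * α + 1) * Q - 2 * Z ≤ ρ * (α ^ 2 * Q + Z) := fun α => by
    have := h (Sum.elim (α • (N *ᵥ z)) z)
    rwa [fromBlocks_mulVec_sumElim_dotProduct, sumElim_dotProduct_sumElim, smul_dotProduct,
      dotProduct_smul, smul_eq_mul, smul_eq_mul, ← mul_assoc, ← sq] at this
  have hX : 0 ≤ x ⬝ᵥ x := Fintype.sum_nonneg fun i => mul_self_nonneg (x i)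
  have hZ : 0 ≤ Z := Fintype.sum_nonneg fun i => mul_self_nonneg (z i)
  have hc : 1 + ρ - 1 / (1 + ρ) = ρ * (2 + ρ) / (1 + ρ) := by field_simp; ring
  rw [← mulVec_mulVec, dotProduct_comm, hZx, hc, div_mul_eq_mul_div, le_div_iff₀ (by positivity)]
  rcases hZ.eq_or_lt with hZ0 | hZpos
  · rw [← hZ0, zero_mul]
    exact mul_nonneg (by positivity) hX
  have hQ : 0 < Q := by nlinarith
  rcases hρ.eq_or_lt with rfl | hρpos
  · have := htest (Z / Q)
    field_simp at this
    nlinarith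
  · have := htest (1 / ρ)
    field_simp at this
    nlinarith

end TestVector

def edgeIncMatrix : Matrix V G.edgeSet ℝ := (G.incMatrix ℝ).submatrix id Subtype.val

omit [Fintype V] in
theorem edgeIncMatrix_apply (u : V) (e : G.edgeSet) :
    edgeIncMatrix G u e = if u ∈ (e : Sym2 V) then 1 else 0 := by
  simp [edgeIncMatrix, SimpleGraph.incMatrix_apply', SimpleGraph.incidenceSet, e.2]

theorem edgeIncMatrix_mul_transpose :
    edgeIncMatrix G * (edgeIncMatrix G)ᵀ = G.incMatrix ℝ * (G.incMatrix ℝ)ᵀ := by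
  ext u v
  refine (Finset.sum_subtype G.edgeFinset (fun _ => G.mem_edgeFinset)
    fun e => G.incMatrix ℝ u e * G.incMatrix ℝ v e).symm.trans ?_
  refine Finset.sum_subset (Finset.subset_univ _) fun e _ he => ?_
  rw [G.incMatrix_of_notMem_incidenceSet fun h => he (G.mem_edgeFinset.2 h.1), zero_mul]

theorem abs_kirchhoff_apply_le (u v : V) :
    |kirchhoff G u v| ≤ (G.incMatrix ℝ * (G.incMatrix ℝ)ᵀ) u v := by
  rw [G.incMatrix_mul_transpose]
  by_cases huv : u = v
  · simp [kirchhoff, huv]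
  · by_cases hadj : G.Adj u v <;> simp [kirchhoff, huv, hadj]

theorem transpose_mul_edgeIncMatrix_apply_of_ne {e f : G.edgeSet} (hef : e ≠ f) :
    ((edgeIncMatrix G)ᵀ * edgeIncMatrix G) e f
      = if ∃ w, w ∈ (e : Sym2 V) ∧ w ∈ (f : Sym2 V) then 1 else 0 := by
  have hunique : ∀ u w, u ∈ (e : Sym2 V) → u ∈ (f : Sym2 V) → w ∈ (e : Sym2 V) →
      w ∈ (f : Sym2 V) → u = w := fun u w hue huf hwe hwf => by
    by_contra huw
    exact hef (Subtype.ext (((Sym2.mem_and_mem_iff huw).1 ⟨hue, hwe⟩).trans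
      ((Sym2.mem_and_mem_iff huw).1 ⟨huf, hwf⟩).symm))
  simp only [mul_apply, transpose_apply, edgeIncMatrix_apply, ite_zero_mul_ite_zero, mul_one]
  split_ifs with hw
  · obtain ⟨w, hwe, hwf⟩ := hw
    rw [Finset.sum_eq_single w (fun u _ hu => if_neg fun h => hu (hunique u w h.1 h.2 hwe hwf))
      (by simp), if_pos ⟨hwe, hwf⟩]
  · exact Finset.sum_eq_zero fun u _ => if_neg fun h => hw ⟨u, h⟩

theorem transpose_mul_edgeIncMatrix_apply_self (e : G.edgeSet) :
    ((edgeIncMatrix G)ᵀ * edgeIncMatrix G) e e = 2 := by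
  have := G.incMatrix_transpose_mul_diag (R := ℝ) (e := e)
  rwa [if_pos e.2] at this

omit [Fintype V] [DecidableEq V] in
@[simp]
theorem connGraph_adj {x y : Simplex G} : (connGraph G).Adj x y ↔ x ≠ y ∧ touches G x y :=
  Iff.rfl

theorem connGraph_adjMatrix_eq_fromBlocks :
    (connGraph G).adjMatrix ℝ = fromBlocks 0 (edgeIncMatrix G) (edgeIncMatrix G)ᵀ
      ((edgeIncMatrix G)ᵀ * edgeIncMatrix G - 2) := by
  ext (u | e) (v | f)
  all_goals simp only [SimpleGraph.adjMatrix_apply, connGraph_adj, fromBlocks_apply₁₁,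
    fromBlocks_apply₁₂, fromBlocks_apply₂₁, fromBlocks_apply₂₂, Matrix.sub_apply,
    Matrix.ofNat_apply]
  · simp [touches, sVerts]
  · simp [touches, sVerts, edgeIncMatrix_apply]
  · simp [touches, sVerts, edgeIncMatrix_apply]
  · by_cases hef : e = f
    · subst hef
      simp [transpose_mul_edgeIncMatrix_apply_self]
    · simp [touches, sVerts, hef, transpose_mul_edgeIncMatrix_apply_of_ne G hef]

theorem maxPaths_nonneg (k : ℕ) : 0 ≤ maxPaths G k :=
  Real.iSup_nonneg fun _ => Fintype.sum_nonneg fun _ => by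
    rw [SimpleGraph.adjMatrix_pow_apply_eq_card_walk]
    positivity

theorem random_walk_estimate (k : ℕ) (hk : 1 ≤ k) (μ : ℝ)
    (hμ : ∃ w : V → ℝ, w ≠ 0 ∧ (kirchhoff G).mulVec w = μ • w) :
    μ ≤ (1 + (maxPaths G k) ^ ((1 : ℝ) / k))
        - 1 / (1 + (maxPaths G k) ^ ((1 : ℝ) / k)) := by
  obtain ⟨w, hw0, hKw⟩ := hμ
  have hρ : 0 ≤ maxPaths G k ^ ((1 : ℝ) / k) := Real.rpow_nonneg (maxPaths_nonneg G k) _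
  have hA' : ∀ v, (connGraph G).adjMatrix ℝ *ᵥ v ⬝ᵥ v ≤ maxPaths G k ^ ((1 : ℝ) / k) * (v ⬝ᵥ v) :=
    (connGraph G).adjMatrix_mulVec_dotProduct_le (by omega)
  rw [connGraph_adjMatrix_eq_fromBlocks] at hA'
  have hM := mul_transpose_mulVec_dotProduct_le _ hρ hA' |w|
  rw [edgeIncMatrix_mul_transpose] at hM
  have hw : 0 < w ⬝ᵥ w := (Fintype.sum_nonneg fun i => mul_self_nonneg (w i)).lt_of_ne'
    (dotProduct_self_eq_zero.not.2 hw0)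
  refine le_of_mul_le_mul_right ?_ hw
  calc μ * (w ⬝ᵥ w) = kirchhoff G *ᵥ w ⬝ᵥ w := by rw [hKw, smul_dotProduct, smul_eq_mul]
    _ ≤ (G.incMatrix ℝ * (G.incMatrix ℝ)ᵀ) *ᵥ |w| ⬝ᵥ |w| :=
      mulVec_dotProduct_le_of_abs_le (abs_kirchhoff_apply_le G) w
    _ ≤ _ := hM
    _ = _ := by simp [dotProduct, abs_mul_abs_self]
end
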